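/- arXiv:1904.02438 — 2 statements merged into one kernel-verified Lean document; each statement's English description precedes it below -/
import Mathlib

section
/- Let y_te and ŷ_te be square-integrable real random variables and let y = (y_1,…,y_n) and ŷ_cv = ((ŷ_cv)_1,…,(ŷ_cv)_n) be square-integrable random vectors in ℝ^n. Define w_cv = E[(y_te − ŷ_te)²] − (1/n)E[‖y − ŷ_cv‖²]. If (1/n)E[‖y − E y‖²] = Var(y_te), then w_cv = (E ŷ_te − E y_te)² − (1/n)‖E ŷ_cv − E y‖² + Var(ŷ_te) − (1/n)E[‖ŷ_cv − E ŷ_cv‖²] − 2 Cov(ŷ_te, y_te) + (2/n)∑_{k=1}^n Cov((ŷ_cv)_k, y_k). (Paper's Eq. (5), the general decomposition of the CV bias into bias, variance and covariance differences.) -/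
/-! Every mean squared difference `E[(X - Y)²]` splits as
`(E Y - E X)² + Var X + Var Y - 2 Cov(X, Y)`, since `E[Z²] = Var Z + (E Z)²` and the variance of
a difference expands bilinearly. Applying this to the test pair and to every training coordinate,
the hypothesis lets the averaged training-response variance cancel the test-response variance. -/

open MeasureTheory

/-- Variance `E[(U - E U)^2]` of a real random variable. -/
noncomputable def eVar {Ω : Type*} [MeasurableSpace Ω] (μ : Measure Ω) (U : Ω → ℝ) : ℝ :=
  ∫ ω, (U ω - ∫ ω', U ω' ∂μ) ^ 2 ∂μ

/-- Covariance `E[(U - E U)(V - E V)]` of two real random variables. -/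
noncomputable def eCov {Ω : Type*} [MeasurableSpace Ω] (μ : Measure Ω) (U V : Ω → ℝ) : ℝ :=
  ∫ ω, (U ω - ∫ ω', U ω' ∂μ) * (V ω - ∫ ω', V ω' ∂μ) ∂μ

open ProbabilityTheory

section

variable {Ω : Type*} [MeasurableSpace Ω] {μ : Measure Ω}

lemma eVar_eq_variance {U : Ω → ℝ} (hU : AEMeasurable U μ) : eVar μ U = Var[U; μ] :=
  (variance_eq_integral hU).symm

lemma eCov_eq_covariance (U V : Ω → ℝ) : eCov μ U V = cov[U, V; μ] := rfl

lemma integral_sq_eq_variance_add_sq [IsProbabilityMeasure μ] {X : Ω → ℝ} (hX : MemLp X 2 μ) :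
    ∫ ω, X ω ^ 2 ∂μ = Var[X; μ] + (∫ ω, X ω ∂μ) ^ 2 := by
  rw [variance_eq_sub hX]
  simp

lemma integral_sub_sq [IsProbabilityMeasure μ] {X Y : Ω → ℝ} (hX : MemLp X 2 μ)
    (hY : MemLp Y 2 μ) :
    ∫ ω, (X ω - Y ω) ^ 2 ∂μ =
      (μ[Y] - μ[X]) ^ 2 + Var[X; μ] + Var[Y; μ] - 2 * cov[X, Y; μ] := by
  rw [integral_sq_eq_variance_add_sq (X := fun ω => X ω - Y ω) (hX.sub hY),
    variance_fun_sub hX hY, integral_sub (hX.integrable one_le_two) (hY.integrable one_le_two)]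
  ring

lemma integral_sum_sub_sq [IsFiniteMeasure μ] {ι : Type*} [Fintype ι] {X Y : ι → Ω → ℝ}
    (hX : ∀ i, MemLp (X i) 2 μ) (hY : ∀ i, MemLp (Y i) 2 μ) :
    ∫ ω, ∑ i, (X i ω - Y i ω) ^ 2 ∂μ = ∑ i, ∫ ω, (X i ω - Y i ω) ^ 2 ∂μ :=
  integral_finsetSum (f := fun i ω => (X i ω - Y i ω) ^ 2) _ fun i _ =>
    ((hX i).sub (hY i)).integrable_sq

lemma integral_sum_sub_integral_sq [IsFiniteMeasure μ] {ι : Type*} [Fintype ι]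
    {X : ι → Ω → ℝ} (hX : ∀ i, MemLp (X i) 2 μ) :
    ∫ ω, ∑ i, (X i ω - μ[X i]) ^ 2 ∂μ = ∑ i, Var[X i; μ] := by
  rw [integral_sum_sub_sq (Y := fun i _ => μ[X i]) hX fun i => memLp_const _]
  exact Finset.sum_congr rfl fun i _ => (variance_eq_integral (hX i).aemeasurable).symm

end

theorem cv_bias_decomposition_general
    {Ω : Type*} [MeasurableSpace Ω] (μ : Measure Ω) [IsProbabilityMeasure μ]
    (n : ℕ)
    (yte yhatte : Ω → ℝ) (y yhatcv : Fin n → Ω → ℝ)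
    (hyte : MemLp yte 2 μ) (hyhatte : MemLp yhatte 2 μ)
    (hy : ∀ k, MemLp (y k) 2 μ) (hyhatcv : ∀ k, MemLp (yhatcv k) 2 μ)
    (hvar : (1 / (n : ℝ)) * ∫ ω, ∑ k, (y k ω - ∫ ω', y k ω' ∂μ) ^ 2 ∂μ = eVar μ yte) :
    (∫ ω, (yte ω - yhatte ω) ^ 2 ∂μ) -
        (1 / (n : ℝ)) * ∫ ω, ∑ k, (y k ω - yhatcv k ω) ^ 2 ∂μ =
      ((∫ ω, yhatte ω ∂μ) - ∫ ω, yte ω ∂μ) ^ 2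
        - (1 / (n : ℝ)) * ∑ k, ((∫ ω, yhatcv k ω ∂μ) - ∫ ω, y k ω ∂μ) ^ 2
        + eVar μ yhatte
        - (1 / (n : ℝ)) * ∫ ω, ∑ k, (yhatcv k ω - ∫ ω', yhatcv k ω' ∂μ) ^ 2 ∂μ
        - 2 * eCov μ yhatte yte
        + (2 / (n : ℝ)) * ∑ k, eCov μ (yhatcv k) (y k) := by
  rw [integral_sum_sub_integral_sq hy, eVar_eq_variance hyte.aemeasurable] at hvar
  rw [integral_sum_sub_sq hy hyhatcv, integral_sum_sub_integral_sq hyhatcv,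
    integral_sub_sq hyte hyhatte, eVar_eq_variance hyhatte.aemeasurable]
  simp only [integral_sub_sq (hy _) (hyhatcv _), eCov_eq_covariance, covariance_comm yhatte,
    covariance_comm (yhatcv _), Finset.sum_add_distrib, Finset.sum_sub_distrib,
    ← Finset.mul_sum]
  linear_combination -hvar

/-- **Paper's Eq. (5).** General decomposition of the CV bias
`w_cv = E[(y_te − yhat_te)²] − (1/n)E[‖y − yhat_cv‖²]` into differences of squared biases,
variances, and response–predictor covariances, under the assumption that the averaged
variance of the training responses equals the variance of the test response. -/
theorem cv_bias_decomposition
    {Ω : Type*} [MeasurableSpace Ω] (μ : Measure Ω) [IsProbabilityMeasure μ]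
    (n : ℕ) (hn : 0 < n)
    (yte yhatte : Ω → ℝ) (y yhatcv : Fin n → Ω → ℝ)
    (hyte : MemLp yte 2 μ) (hyhatte : MemLp yhatte 2 μ)
    (hy : ∀ k, MemLp (y k) 2 μ) (hyhatcv : ∀ k, MemLp (yhatcv k) 2 μ)
    (hvar : (1 / (n : ℝ)) * ∫ ω, ∑ k, (y k ω - ∫ ω', y k ω' ∂μ) ^ 2 ∂μ = eVar μ yte) :
    (∫ ω, (yte ω - yhatte ω) ^ 2 ∂μ) -
        (1 / (n : ℝ)) * ∫ ω, ∑ k, (y k ω - yhatcv k ω) ^ 2 ∂μ =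
      ((∫ ω, yhatte ω ∂μ) - ∫ ω, yte ω ∂μ) ^ 2
        - (1 / (n : ℝ)) * ∑ k, ((∫ ω, yhatcv k ω ∂μ) - ∫ ω, y k ω ∂μ) ^ 2
        + eVar μ yhatte
        - (1 / (n : ℝ)) * ∫ ω, ∑ k, (yhatcv k ω - ∫ ω', yhatcv k ω' ∂μ) ^ 2 ∂μ
        - 2 * eCov μ yhatte yte
        + (2 / (n : ℝ)) * ∑ k, eCov μ (yhatcv k) (y k) :=
  cv_bias_decomposition_general μ n yte yhatte y yhatcv hyte hyhatte hy hyhatcv hvar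
end

section
/- Fixed-design setting: let y : Ω → ℝ^n be a square-integrable random vector with covariance matrix Σ (Σ_{ij} = Cov(y_i, y_j)), let H be a deterministic n×n real matrix with zero diagonal (so the CV predictor is ŷ_cv = H y and (Hy)_k does not involve y_k), let y_tr : Ω → ℝ^{n−1} be a square-integrable random vector, y_te : Ω → ℝ a square-integrable random variable, and h_te ∈ ℝ^{n−1} a deterministic row vector (the test hat vector, so ŷ_te = h_te · y_tr). Assume for every k ∈ {1,…,n}: E y_k = E y_te, Var(y_k) = Var(y_te), E[(Hy)_k] = E[h_te · y_tr], and Var((Hy)_k) = Var(h_te · y_tr). Then w_cv := E[(y_te − h_te · y_tr)²] − (1/n)E[‖y − H y‖²] = (2/n)[tr(H Σ) − n (h_te · c)], where c ∈ ℝ^{n−1} is the cross-covariance vector c_j = Cov((y_tr)_j, y_te). (Paper's Theorem 2 for linear predictors.) -/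
open MeasureTheory

/-!
Expand each mean squared difference as `Var U + Var V - 2 Cov(U, V) + (E U - E V)²`. The
matching assumptions make every held-out term agree with the test term except in the
covariance, so the CV bias is `(2/n) ∑ₖ Cov(yₖ, (Hy)ₖ) - 2 Cov(y_te, h_te · y_tr)`; bilinearity
of the covariance turns the first sum into `tr(H Σ)` and the second into `h_te · c`.
-/

open ProbabilityTheory

section

variable {Ω : Type*} [MeasurableSpace Ω] {μ : Measure Ω}

lemma eVar_eq_covariance_self (U : Ω → ℝ) : eVar μ U = cov[U, U; μ] := by
  simp only [eVar, covariance, sq]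

lemma memLp_fun_sum_const_mul {ι : Type*} [Fintype ι] {p : ENNReal} {V : ι → Ω → ℝ}
    (hV : ∀ j, MemLp (V j) p μ) (a : ι → ℝ) : MemLp (fun ω ↦ ∑ j, a j * V j ω) p μ :=
  memLp_finsetSum _ fun j _ ↦ (hV j).const_mul (a j)

lemma covariance_fun_sum_const_mul_right [IsFiniteMeasure μ] {ι : Type*} [Fintype ι]
    {U : Ω → ℝ} {V : ι → Ω → ℝ} (hU : MemLp U 2 μ) (hV : ∀ j, MemLp (V j) 2 μ) (a : ι → ℝ) :
    cov[U, fun ω ↦ ∑ j, a j * V j ω; μ] = ∑ j, a j * cov[U, V j; μ] := by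
  rw [covariance_fun_sum_right (X := fun j ω ↦ a j * V j ω) (fun j ↦ (hV j).const_mul (a j)) hU]
  simp only [covariance_const_mul_right]

lemma integral_sub_sq_eq [IsProbabilityMeasure μ] {U V : Ω → ℝ}
    (hU : MemLp U 2 μ) (hV : MemLp V 2 μ) :
    ∫ ω, (U ω - V ω) ^ 2 ∂μ
      = cov[U, U; μ] + cov[V, V; μ] - 2 * cov[U, V; μ] + (μ[U] - μ[V]) ^ 2 := by
  have h := covariance_eq_sub (hU.sub hV) (hU.sub hV)
  rw [covariance_sub_sub hU hV hU hV, covariance_comm V U] at h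
  simp only [Pi.sub_apply, Pi.mul_apply, integral_sub (hU.integrable one_le_two)
    (hV.integrable one_le_two)] at h
  simp only [sq]
  linarith

lemma integral_sub_sq_sub_integral_sub_sq [IsProbabilityMeasure μ] {U V U' V' : Ω → ℝ}
    (hU : MemLp U 2 μ) (hV : MemLp V 2 μ) (hU' : MemLp U' 2 μ) (hV' : MemLp V' 2 μ)
    (hmeanU : μ[U] = μ[U']) (hmeanV : μ[V] = μ[V'])
    (hvarU : cov[U, U; μ] = cov[U', U'; μ]) (hvarV : cov[V, V; μ] = cov[V', V'; μ]) :
    ∫ ω, (U ω - V ω) ^ 2 ∂μ - ∫ ω, (U' ω - V' ω) ^ 2 ∂μ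
      = 2 * (cov[U', V'; μ] - cov[U, V; μ]) := by
  rw [integral_sub_sq_eq hU hV, integral_sub_sq_eq hU' hV', hmeanU, hmeanV, hvarU, hvarV]
  ring

lemma trace_mul_eq_sum_covariance [IsFiniteMeasure μ] {ι : Type*} [Fintype ι]
    {y : ι → Ω → ℝ} (hy : ∀ k, MemLp (y k) 2 μ) (H Sig : Matrix ι ι ℝ)
    (hSig : ∀ i j, Sig i j = cov[y i, y j; μ]) :
    (H * Sig).trace = ∑ k, cov[y k, fun ω ↦ ∑ j, H k j * y j ω; μ] := by
  refine Finset.sum_congr rfl fun k _ ↦ ?_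
  rw [covariance_fun_sum_const_mul_right (hy k) hy, Matrix.diag_apply, Matrix.mul_apply]
  simp only [hSig, covariance_comm (y _) (y k)]

end

theorem cv_bias_linear_predictor_general
    {Ω : Type*} [MeasurableSpace Ω] (μ : Measure Ω) [IsProbabilityMeasure μ]
    (n : ℕ) (hn : 0 < n)
    (y : Fin n → Ω → ℝ) (hy : ∀ k, MemLp (y k) 2 μ)
    (H : Matrix (Fin n) (Fin n) ℝ)
    (ytr : Fin (n - 1) → Ω → ℝ) (hytr : ∀ j, MemLp (ytr j) 2 μ)
    (yte : Ω → ℝ) (hyte : MemLp yte 2 μ)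
    (hte : Fin (n - 1) → ℝ)
    (Sig : Matrix (Fin n) (Fin n) ℝ)
    (hSig : ∀ i j, Sig i j = eCov μ (y i) (y j))
    (hmean : ∀ k, ∫ ω, y k ω ∂μ = ∫ ω, yte ω ∂μ)
    (hvar : ∀ k, eVar μ (y k) = eVar μ yte)
    (hmeanH : ∀ k, ∫ ω, (∑ j, H k j * y j ω) ∂μ = ∫ ω, (∑ j, hte j * ytr j ω) ∂μ)
    (hvarH : ∀ k, eVar μ (fun ω => ∑ j, H k j * y j ω)
        = eVar μ (fun ω => ∑ j, hte j * ytr j ω)) :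
    (∫ ω, (yte ω - ∑ j, hte j * ytr j ω) ^ 2 ∂μ)
        - (1 / (n : ℝ)) * ∫ ω, ∑ k, (y k ω - ∑ j, H k j * y j ω) ^ 2 ∂μ
      = (2 / (n : ℝ)) * (Matrix.trace (H * Sig)
          - (n : ℝ) * ∑ j, hte j * eCov μ (ytr j) yte) := by
  simp only [eVar_eq_covariance_self] at hvar hvarH
  have hpred : ∀ k, MemLp (fun ω ↦ ∑ j, H k j * y j ω) 2 μ :=
    fun k ↦ memLp_fun_sum_const_mul hy (H k)
  have hpred_te := memLp_fun_sum_const_mul hytr hte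
  have hgap : ∀ k, ∫ ω, (yte ω - ∑ j, hte j * ytr j ω) ^ 2 ∂μ
      - ∫ ω, (y k ω - ∑ j, H k j * y j ω) ^ 2 ∂μ
      = 2 * (cov[y k, fun ω ↦ ∑ j, H k j * y j ω; μ]
        - cov[yte, fun ω ↦ ∑ j, hte j * ytr j ω; μ]) := fun k ↦
    integral_sub_sq_sub_integral_sub_sq hyte hpred_te (hy k) (hpred k) (hmean k).symm
      (hmeanH k).symm (hvar k).symm (hvarH k).symm
  have htrace := trace_mul_eq_sum_covariance hy H Sig hSig
  have hcross : cov[yte, fun ω ↦ ∑ j, hte j * ytr j ω; μ] = ∑ j, hte j * eCov μ (ytr j) yte := by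
    simp only [covariance_fun_sum_const_mul_right hyte hytr, eCov_eq_covariance,
      covariance_comm yte]
  rw [integral_finsetSum (f := fun k ω ↦ (y k ω - ∑ j, H k j * y j ω) ^ 2) _
    fun k _ ↦ ((hy k).sub (hpred k)).integrable_sq, htrace, ← hcross]
  have hn' : (n : ℝ) ≠ 0 := by exact_mod_cast hn.ne'
  calc _ = (1 / (n : ℝ)) * ∑ k : Fin n, (∫ ω, (yte ω - ∑ j, hte j * ytr j ω) ^ 2 ∂μ
        - ∫ ω, (y k ω - ∑ j, H k j * y j ω) ^ 2 ∂μ) := by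
        rw [Finset.sum_sub_distrib, Finset.sum_const, Finset.card_univ, Fintype.card_fin,
          nsmul_eq_mul]
        field_simp
    _ = _ := by
        simp only [hgap, ← Finset.mul_sum, Finset.sum_sub_distrib, Finset.sum_const,
          Finset.card_univ, Fintype.card_fin, nsmul_eq_mul]
        ring

/-- **Paper's Theorem 2** (fixed-design, linear predictors). With a zero-diagonal CV hat
matrix `H` (so `ŷ_cv = H y`), a test hat vector `h_te` (so `ŷ_te = h_te · y_tr`), and
matching means and variances of held-out responses/predictors and test response/predictor,
the CV bias equals `(2/n) [tr(H Σ) − n h_te · Cov(y_tr, y_te)]`. -/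
theorem cv_bias_linear_predictor
    {Ω : Type*} [MeasurableSpace Ω] (μ : Measure Ω) [IsProbabilityMeasure μ]
    (n : ℕ) (hn : 0 < n)
    (y : Fin n → Ω → ℝ) (hy : ∀ k, MemLp (y k) 2 μ)
    (H : Matrix (Fin n) (Fin n) ℝ) (hHdiag : ∀ k, H k k = 0)
    (ytr : Fin (n - 1) → Ω → ℝ) (hytr : ∀ j, MemLp (ytr j) 2 μ)
    (yte : Ω → ℝ) (hyte : MemLp yte 2 μ)
    (hte : Fin (n - 1) → ℝ)
    (Sig : Matrix (Fin n) (Fin n) ℝ)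
    (hSig : ∀ i j, Sig i j = eCov μ (y i) (y j))
    (hmean : ∀ k, ∫ ω, y k ω ∂μ = ∫ ω, yte ω ∂μ)
    (hvar : ∀ k, eVar μ (y k) = eVar μ yte)
    (hmeanH : ∀ k, ∫ ω, (∑ j, H k j * y j ω) ∂μ = ∫ ω, (∑ j, hte j * ytr j ω) ∂μ)
    (hvarH : ∀ k, eVar μ (fun ω => ∑ j, H k j * y j ω)
        = eVar μ (fun ω => ∑ j, hte j * ytr j ω)) :
    (∫ ω, (yte ω - ∑ j, hte j * ytr j ω) ^ 2 ∂μ)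
        - (1 / (n : ℝ)) * ∫ ω, ∑ k, (y k ω - ∑ j, H k j * y j ω) ^ 2 ∂μ
      = (2 / (n : ℝ)) * (Matrix.trace (H * Sig)
          - (n : ℝ) * ∑ j, hte j * eCov μ (ytr j) yte) :=
  cv_bias_linear_predictor_general μ n hn y hy H ytr hytr yte hyte hte Sig hSig hmean hvar hmeanH
    hvarH
end
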